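/- The iterated matching-removal algorithm on a bipartite graph G is a (1 + k/(k+2))-approximation for the maximum k-dependent set problem: its output S is a k-dependent set of G with |I*_k| ≤ (1 + k/(k+2))·|S|, where I*_k is a maximum k-dependent set. -/

import Mathlib

open scoped Classical

variable {V : Type*} [Fintype V] [DecidableEq V]

/-- A matching of `G`, given as a finite set of edges of `G` that are pairwise vertex-disjoint. -/
def IsMatchingE (G : SimpleGraph V) (M : Finset (Sym2 V)) : Prop :=
  ↑M ⊆ G.edgeSet ∧ (M : Set (Sym2 V)).Pairwise fun e f => ∀ v, v ∈ e → v ∉ f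

/-- A maximum-cardinality matching of `G`. -/
def IsMaxMatchingE (G : SimpleGraph V) (M : Finset (Sym2 V)) : Prop :=
  IsMatchingE G M ∧ ∀ M', IsMatchingE G M' → M'.card ≤ M.card

/-- An independent set of `G`. -/
def IsIndepF (G : SimpleGraph V) (S : Finset V) : Prop :=
  ∀ v ∈ S, ∀ w ∈ S, ¬G.Adj v w

/-- A maximum-cardinality independent set of `G`. -/
def IsMaxIndepF (G : SimpleGraph V) (S : Finset V) : Prop :=
  IsIndepF G S ∧ ∀ S', IsIndepF G S' → S'.card ≤ S.card

/-- A `k`-dependent set: every vertex of the induced subgraph `G[S]` has degree at most `k`. -/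
def KDepSet (G : SimpleGraph V) (k : ℕ) (S : Finset V) : Prop :=
  ∀ v ∈ S, (S.filter fun w => G.Adj v w).card ≤ k

/-- A maximum-cardinality `k`-dependent set of `G`. -/
def IsMaxKDep (G : SimpleGraph V) (k : ℕ) (S : Finset V) : Prop :=
  KDepSet G k S ∧ ∀ T, KDepSet G k T → T.card ≤ S.card

/-- The edges of the induced subgraph `G[S]`. -/
noncomputable def inducedEdges (G : SimpleGraph V) (S : Finset V) : Finset (Sym2 V) :=
  G.edgeFinset.filter fun e => ∀ v ∈ e, v ∈ S

/-- The residual graph after deleting the matchings `M 0, ..., M (i-1)` from `G`. -/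
def resid (G : SimpleGraph V) (M : ℕ → Finset (Sym2 V)) (i : ℕ) : SimpleGraph V :=
  G.deleteEdges (⋃ j ∈ Set.Iio i, (M j : Set (Sym2 V)))

/-- The accumulated set of deleted edges `M 0 ∪ ... ∪ M (k-1)`. -/
def accumM (M : ℕ → Finset (Sym2 V)) (k : ℕ) : Finset (Sym2 V) :=
  (Finset.range k).biUnion M

/-!
Every edge of `G` inside `S` was removed in one of the `k` rounds, and each removed matching meets
a vertex at most once, so `S` is `k`-dependent.

For the ratio, let `T` be `k`-dependent and `n = |V|`. By König's theorem (Hall's theorem applied to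
each colour class outside the maximum independent set `S`), the residual graph `G_k` has a matching
`N` with `|N| = n - |S|`; each `M_i` is at least as large, since `N` is a matching of
`G_i ⊇ G_k`. The `k + 1` matchings `M_0, …, M_{k-1}, N` are edge-disjoint. The edges of a
matching not inside `T` have distinct endpoints outside `T`, so there are at most `n - |T|` of
them, while all `k + 1` matchings together have at most `|E(G[T])| ≤ k|T|/2` edges inside `T`.
Hence `(k + 1)(n - |S|) ≤ k|T|/2 + (k + 1)(n - |T|)`, that is `(k + 2)|T| ≤ 2(k + 1)|S|`.
-/

set_option linter.unusedSectionVars false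

open Finset

section Residual

lemma resid_le (G : SimpleGraph V) (M : ℕ → Finset (Sym2 V)) (i : ℕ) : resid G M i ≤ G :=
  SimpleGraph.deleteEdges_le _

lemma resid_antitone (G : SimpleGraph V) (M : ℕ → Finset (Sym2 V)) : Antitone (resid G M) :=
  fun _ _ hij => SimpleGraph.deleteEdges_anti <|
    Set.biUnion_subset_biUnion_left fun _ hl => lt_of_lt_of_le hl hij

variable {G : SimpleGraph V} {M : ℕ → Finset (Sym2 V)}

lemma mem_edgeSet_resid {i : ℕ} {e : Sym2 V} :
    e ∈ (resid G M i).edgeSet ↔ e ∈ G.edgeSet ∧ ∀ j < i, e ∉ M j := by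
  simp [resid]

lemma resid_adj {i : ℕ} {v w : V} :
    (resid G M i).Adj v w ↔ G.Adj v w ∧ ∀ j < i, s(v, w) ∉ M j := by
  simp [resid]

lemma resid_update_of_le {k j : ℕ} (N : Finset (Sym2 V)) (hj : j ≤ k) :
    resid G (Function.update M k N) j = resid G M j := by
  ext v w
  simp only [resid_adj]
  refine and_congr_right fun _ => forall₂_congr fun i hi => ?_
  rw [Function.update_of_ne (hi.trans_le hj).ne]

lemma pairwiseDisjoint_of_subset_resid {m : ℕ}
    (h : ∀ j < m, (M j : Set (Sym2 V)) ⊆ (resid G M j).edgeSet) :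
    (range m : Set ℕ).PairwiseDisjoint M := by
  have hlt : ∀ i j, i < j → j < m → Disjoint (M i) (M j) := fun i j hij hj =>
    disjoint_right.2 fun e he => (mem_edgeSet_resid.1 (h j hj he)).2 i hij
  intro i hi j hj hne
  simp only [coe_range, Set.mem_Iio] at hi hj
  rcases lt_or_gt_of_ne hne with hij | hji
  · exact hlt i j hij hj
  · exact (hlt j i hji hi).symm

end Residual

section Matching

variable {G H : SimpleGraph V} {M : Finset (Sym2 V)}

lemma IsMatchingE.mono (hM : IsMatchingE G M) (hGH : G ≤ H) : IsMatchingE H M :=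
  ⟨hM.1.trans (SimpleGraph.edgeSet_mono hGH), hM.2⟩

lemma IsMatchingE.eq_of_mem (hM : IsMatchingE G M) {e f : Sym2 V} (he : e ∈ M) (hf : f ∈ M)
    {v : V} (hve : v ∈ e) (hvf : v ∈ f) : e = f := by
  by_contra hne
  exact hM.2 he hf hne v hve hvf

lemma IsMatchingE.card_le_card_inter_inducedEdges_add (hM : IsMatchingE G M) (T : Finset V) :
    #M ≤ #(M ∩ inducedEdges G T) + #(univ \ T) := by
  have houter : #(M \ inducedEdges G T) ≤ #(univ \ T) := by
    refine card_le_card_of_forall_subsingleton (fun e v => v ∈ e) (fun e he => ?_)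
      fun v _ e₁ he₁ e₂ he₂ => hM.eq_of_mem (mem_sdiff.1 he₁.1).1 (mem_sdiff.1 he₂.1).1 he₁.2 he₂.2
    obtain ⟨heM, heT⟩ := mem_sdiff.1 he
    have heG : e ∈ G.edgeFinset := SimpleGraph.mem_edgeFinset.2 (hM.1 heM)
    simpa [inducedEdges, heG, and_comm] using heT
  rw [← card_inter_add_card_sdiff M (inducedEdges G T)]
  omega

lemma sum_card_le_card_inducedEdges_add {ι : Type*} {s : Finset ι} {X : ι → Finset (Sym2 V)}
    (hX : ∀ i ∈ s, IsMatchingE G (X i)) (hdisj : (s : Set ι).PairwiseDisjoint X) (T : Finset V) :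
    ∑ i ∈ s, #(X i) ≤ #(inducedEdges G T) + #s * #(univ \ T) := by
  have hdisj' : (s : Set ι).PairwiseDisjoint fun i => X i ∩ inducedEdges G T :=
    hdisj.mono fun _ => inter_subset_left
  calc ∑ i ∈ s, #(X i) ≤ ∑ i ∈ s, (#(X i ∩ inducedEdges G T) + #(univ \ T)) :=
        sum_le_sum fun i hi => (hX i hi).card_le_card_inter_inducedEdges_add T
    _ = #(s.biUnion fun i => X i ∩ inducedEdges G T) + #s * #(univ \ T) := by
        rw [sum_add_distrib, card_biUnion hdisj', sum_const, smul_eq_mul]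
    _ ≤ #(inducedEdges G T) + #s * #(univ \ T) := by
        gcongr
        exact biUnion_subset.2 fun _ _ => inter_subset_right

end Matching

lemma KDepSet.two_mul_card_inducedEdges_le {G : SimpleGraph V} {k : ℕ} {T : Finset V}
    (hT : KDepSet G k T) : 2 * #(inducedEdges G T) ≤ k * #T := by
  have hcount := card_mul_le_card_mul (s := inducedEdges G T) (t := T) (m := 2) (n := k)
    (fun e v => v ∈ e) ?endpoints ?incident
  · linarith
  case endpoints =>
    intro e he
    obtain ⟨heG, heT⟩ := mem_filter.1 he
    induction e using Sym2.ind with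
    | h a b =>
      rw [← card_pair (G.ne_of_adj (SimpleGraph.mem_edgeFinset.1 heG))]
      refine card_le_card fun x hx => ?_
      have hx' : x = a ∨ x = b := by simpa using hx
      simp only [mem_bipartiteAbove]
      exact ⟨heT x (Sym2.mem_iff.2 hx'), Sym2.mem_iff.2 hx'⟩
  case incident =>
    intro v hv
    calc #((inducedEdges G T).bipartiteBelow (fun e v => v ∈ e) v)
        ≤ #((T.filter (G.Adj v)).image fun w => s(v, w)) := by
          refine card_le_card fun e he => ?_
          obtain ⟨he, hve⟩ := (mem_bipartiteBelow _).1 he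
          obtain ⟨w, rfl⟩ := Sym2.mem_iff_exists.1 hve
          obtain ⟨heG, heT⟩ := mem_filter.1 he
          exact mem_image.2 ⟨w, mem_filter.2 ⟨heT w (Sym2.mem_mk_right v w),
            SimpleGraph.mem_edgeFinset.1 heG⟩, rfl⟩
      _ ≤ #(T.filter (G.Adj v)) := card_image_le
      _ ≤ k := hT v hv

lemma kDepSet_of_isIndepF_resid {G : SimpleGraph V} {M : ℕ → Finset (Sym2 V)} {k : ℕ}
    {S : Finset V} (hM : ∀ i < k, IsMatchingE (resid G M i) (M i))
    (hS : IsIndepF (resid G M k) S) : KDepSet G k S := by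
  intro v hv
  calc #(S.filter (G.Adj v)) ≤ #(range k) := by
        refine card_le_card_of_forall_subsingleton (fun w j => s(v, w) ∈ M j) (fun w hw => ?_)
          fun j hj w₁ hw₁ w₂ hw₂ => Sym2.congr_right.1 <|
            (hM j (mem_range.1 hj)).eq_of_mem hw₁.2 hw₂.2 (Sym2.mem_mk_left v w₁)
              (Sym2.mem_mk_left v w₂)
        obtain ⟨hwS, hvw⟩ := mem_filter.1 hw
        by_contra! hnot
        exact hS v hv w hwS (resid_adj.2 ⟨hvw, fun j hj => hnot j (mem_range.2 hj)⟩)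
    _ = k := card_range k

section Konig

variable {H : SimpleGraph V} {S : Finset V}

lemma IsMaxIndepF.card_le_card_neighbors (hS : IsMaxIndepF H S) {X : Finset V}
    (hX : IsIndepF H X) (hXS : Disjoint X S) : #X ≤ #{b ∈ S | ∃ a ∈ X, H.Adj a b} := by
  set NB := {b ∈ S | ∃ a ∈ X, H.Adj a b}
  have hNB : NB ⊆ S := filter_subset _ _
  have hindep : IsIndepF H (S \ NB ∪ X) := by
    intro u hu w hw huw
    simp only [mem_union, mem_sdiff] at hu hw
    rcases hu with ⟨huS, huN⟩ | huX <;> rcases hw with ⟨hwS, hwN⟩ | hwX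
    · exact hS.1 u huS w hwS huw
    · exact huN (mem_filter.2 ⟨huS, w, hwX, huw.symm⟩)
    · exact hwN (mem_filter.2 ⟨hwS, u, huX, huw⟩)
    · exact hX u huX w hwX huw
  have hcard := hS.2 _ hindep
  rw [card_union_of_disjoint (hXS.symm.mono_left sdiff_subset), card_sdiff_of_subset hNB] at hcard
  have := card_le_card hNB
  omega

lemma IsMaxIndepF.exists_injOn_adj (hS : IsMaxIndepF H S) {A : Finset V}
    (hA : IsIndepF H A) (hAS : Disjoint A S) :
    ∃ f : V → V, Set.InjOn f A ∧ ∀ a ∈ A, f a ∈ S ∧ H.Adj a (f a) := by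
  have hall : ∀ A' : Finset A, #A' ≤ #{b | ∃ a ∈ A', b ∈ S ∧ H.Adj a b} := by
    intro A'
    set X := A'.map (Function.Embedding.subtype _)
    have hXA : X ⊆ A := fun v hv => by
      obtain ⟨a, -, rfl⟩ := mem_map.1 hv
      exact a.2
    calc #A' = #X := (card_map _).symm
      _ ≤ #{b ∈ S | ∃ a ∈ X, H.Adj a b} := hS.card_le_card_neighbors
          (fun v hv w hw => hA v (hXA hv) w (hXA hw)) (disjoint_of_subset_left hXA hAS)
      _ = #{b | ∃ a ∈ A', b ∈ S ∧ H.Adj a b} := by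
          congr 1
          ext b
          simp [X, and_left_comm]
  obtain ⟨f, hf_inj, hf⟩ := (Fintype.all_card_le_filter_rel_iff_exists_injective _).1 hall
  refine ⟨fun v => if hv : v ∈ A then f ⟨v, hv⟩ else v, fun a ha b hb hab => ?_, fun a ha => ?_⟩
  · simp only [mem_coe] at ha hb
    simp only [dif_pos ha, dif_pos hb] at hab
    exact congrArg Subtype.val (hf_inj hab)
  · simpa [dif_pos ha] using hf ⟨a, ha⟩

lemma IsMaxIndepF.exists_isMatchingE_card_eq (hS : IsMaxIndepF H S) (hH : H.Colorable 2) :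
    ∃ N, IsMatchingE H N ∧ #N = #(univ \ S) := by
  obtain ⟨c⟩ := hH
  have hclass : ∀ i, IsIndepF H ((univ \ S).filter (c · = i)) := fun i v hv w hw hvw =>
    c.valid hvw ((mem_filter.1 hv).2.trans (mem_filter.1 hw).2.symm)
  choose f hf_inj hf using fun i => hS.exists_injOn_adj (hclass i)
    (disjoint_of_subset_left (filter_subset _ _) sdiff_disjoint)
  set g := fun v => f (c v) v
  have hmem : ∀ a ∉ S, ∀ i, c a = i → a ∈ (univ \ S).filter (c · = i) := fun a ha i hi =>
    mem_filter.2 ⟨mem_sdiff.2 ⟨mem_univ a, ha⟩, hi⟩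
  have hg : ∀ a ∉ S, g a ∈ S ∧ H.Adj a (g a) := fun a ha => hf (c a) a (hmem a ha _ rfl)
  -- Two of the edges `s(a, g a)` can only meet at `g a = g b`; then `a` and `b` both have the
  -- colour opposite to that of `g a`, and `f` is injective on that colour class.
  have hshare : ∀ a b x, a ∉ S → b ∉ S → x ∈ s(a, g a) → x ∈ s(b, g b) → a = b := by
    intro a b x ha hb hxa hxb
    rcases Sym2.mem_iff.1 hxa with rfl | rfl <;> rcases Sym2.mem_iff.1 hxb with h | h
    · exact h
    · exact absurd (h ▸ (hg b hb).1) ha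
    · exact absurd (h.symm ▸ (hg a ha).1) hb
    · have hfin : ∀ x y z : Fin 2, x ≠ z → y ≠ z → x = y := by decide
      have hcol : c a = c b := hfin _ _ _ (c.valid (hg a ha).2) (h ▸ c.valid (hg b hb).2)
      rw [show g a = f (c b) a by simp [g, hcol]] at h
      exact hf_inj (c b) (hmem a ha _ hcol) (hmem b hb _ rfl) h
  refine ⟨(univ \ S).image fun a => s(a, g a), ⟨fun e he => ?_, fun e he e' he' hne v hve hve' => ?_⟩,
    card_image_of_injOn fun a ha b hb hab => ?_⟩
  · obtain ⟨a, ha, rfl⟩ := mem_image.1 he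
    exact (hg a (mem_sdiff.1 ha).2).2
  · obtain ⟨a, ha, rfl⟩ := mem_image.1 he
    obtain ⟨b, hb, rfl⟩ := mem_image.1 he'
    exact hne (by rw [hshare a b v (mem_sdiff.1 ha).2 (mem_sdiff.1 hb).2 hve hve'])
  · exact hshare a b a (mem_sdiff.1 ha).2 (mem_sdiff.1 hb).2 (Sym2.mem_mk_left _ _)
      (hab ▸ Sym2.mem_mk_left _ _)

end Konig

lemma card_mul_le_of_isMaxIndepF_resid {G : SimpleGraph V} (hG : G.Colorable 2) {k : ℕ}
    {M : ℕ → Finset (Sym2 V)} (hM : ∀ i < k, IsMaxMatchingE (resid G M i) (M i))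
    {S : Finset V} (hS : IsMaxIndepF (resid G M k) S) {T : Finset V} (hT : KDepSet G k T) :
    (k + 2) * #T ≤ 2 * (k + 1) * #S := by
  obtain ⟨N, hN, hNcard⟩ := hS.exists_isMatchingE_card_eq (hG.mono_left (resid_le G M k))
  -- Appending `N` as the `k`-th matching keeps every matching inside its residual graph, which
  -- makes all `k + 1` matchings pairwise disjoint.
  set M' := Function.update M k N
  have hM' : ∀ j < k + 1, IsMatchingE (resid G M' j) (M' j) ∧ #N ≤ #(M' j) := by
    intro j hj
    rw [resid_update_of_le N (Nat.lt_succ_iff.1 hj)]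
    rcases (Nat.lt_succ_iff.1 hj).lt_or_eq with hjk | rfl
    · rw [show M' j = M j from Function.update_of_ne hjk.ne _ _]
      exact ⟨(hM j hjk).1, (hM j hjk).2 N (hN.mono (resid_antitone G M hjk.le))⟩
    · simpa [M'] using hN
  have hsum := sum_card_le_card_inducedEdges_add
    (fun j hj => (hM' j (mem_range.1 hj)).1.mono (resid_le G M' j))
    (pairwiseDisjoint_of_subset_resid fun j hj => (hM' j hj).1.1) T
  have hN_le : (k + 1) * #N ≤ ∑ j ∈ range (k + 1), #(M' j) := by
    simpa using card_nsmul_le_sum _ _ _ fun j hj => (hM' j (mem_range.1 hj)).2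
  have hE := hT.two_mul_card_inducedEdges_le
  have hScompl := card_sdiff_add_card_eq_card (subset_univ S)
  have hTcompl := card_sdiff_add_card_eq_card (subset_univ T)
  rw [card_range] at hsum
  nlinarith

theorem stmt9_general (G : SimpleGraph V) (hG : G.Colorable 2) (k : ℕ)
    (M : ℕ → Finset (Sym2 V)) (hM : ∀ i < k, IsMaxMatchingE (resid G M i) (M i))
    (S : Finset V) (hS : IsMaxIndepF (resid G M k) S)
    (Istar : Finset V) (hIstar : IsMaxKDep G k Istar) :
    KDepSet G k S ∧ (Istar.card : ℝ) ≤ (1 + k/(k+2)) * S.card := by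
  refine ⟨kDepSet_of_isIndepF_resid (fun i hi => (hM i hi).1) hS.1, ?_⟩
  have hbound : ((k + 2) * #Istar : ℝ) ≤ 2 * (k + 1) * #S := by
    exact_mod_cast card_mul_le_of_isMaxIndepF_resid hG hM hS hIstar.1
  rw [show (1 + k / (k + 2) : ℝ) = 2 * (k + 1) / (k + 2) by field_simp; ring, div_mul_eq_mul_div,
    le_div_iff₀ (by positivity)]
  linarith

theorem stmt9 (G : SimpleGraph V) (hG : G.Colorable 2) (k : ℕ) (hk : 1 ≤ k)
    (M : ℕ → Finset (Sym2 V)) (hM : ∀ i < k, IsMaxMatchingE (resid G M i) (M i))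
    (S : Finset V) (hS : IsMaxIndepF (resid G M k) S)
    (Istar : Finset V) (hIstar : IsMaxKDep G k Istar) :
    KDepSet G k S ∧ (Istar.card : ℝ) ≤ (1 + k/(k+2)) * S.card :=
  stmt9_general G hG k M hM S hS Istar hIstar
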